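/- Let (X,d) be an ultrametric space and let B̄₁, B̄₂ be distinct closed balls. Then d_H(B̄₁, B̄₂) = diam B*, where B* is the smallest closed ball containing B̄₁ ∪ B̄₂. -/

import Mathlib

open Metric Set Bornology

/-- The set of all closed balls (with nonnegative radius) of a metric space. -/
def ClosedBalls (X : Type*) [MetricSpace X] : Set (Set X) :=
  {B | ∃ (c : X) (r : ℝ), 0 ≤ r ∧ B = Metric.closedBall c r}

/-- Auxiliary: lower bound r ≤ infDist. -/
lemma le_infDist_aux {X : Type*} [MetricSpace X] {s : Set X} (hs : s.Nonempty) {x : X} {r : ℝ}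
    (h : ∀ y ∈ s, r ≤ dist x y) : r ≤ Metric.infDist x s := by
  by_contra hc
  push_neg at hc
  obtain ⟨y, hy, hlt⟩ := (Metric.infDist_lt_iff hs).1 hc
  exact absurd (h y hy) (not_le.2 hlt)

/-- Auxiliary: in an ultrametric space, if a closed ball is a proper subset of another closed
ball, the diameter of the bigger is at most the Hausdorff distance. -/
lemma diam_le_hausdorffDist_aux {X : Type*} [MetricSpace X]
    (hu : ∀ x y z : X, dist x y ≤ max (dist x z) (dist z y))
    {c₁ : X} {r₁ : ℝ} (hr₁ : 0 ≤ r₁) {B₂ : Set X}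
    (hsub : Metric.closedBall c₁ r₁ ⊆ B₂) (hne : Metric.closedBall c₁ r₁ ≠ B₂)
    (hb₂ : IsBounded B₂) :
    Metric.diam B₂ ≤ Metric.hausdorffDist (Metric.closedBall c₁ r₁) B₂ := by
  set B₁ := Metric.closedBall c₁ r₁ with hB₁
  have hne₁ : B₁.Nonempty := Metric.nonempty_closedBall.2 hr₁
  have hne₂ : B₂.Nonempty := hne₁.mono hsub
  have hbd₁ : IsBounded B₁ := Metric.isBounded_closedBall
  have fin : EMetric.hausdorffEdist B₁ B₂ ≠ ⊤ :=
    Metric.hausdorffEdist_ne_top_of_nonempty_of_bounded hne₁ hne₂ hbd₁ hb₂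
  have fin' : EMetric.hausdorffEdist B₂ B₁ ≠ ⊤ := by
    rwa [show EMetric.hausdorffEdist B₂ B₁ = EMetric.hausdorffEdist B₁ B₂ from EMetric.hausdorffEdist_comm]
  -- points of B₂ outside B₁
  have step1 : ∀ b ∈ B₂, b ∉ B₁ → dist b c₁ ≤ Metric.hausdorffDist B₁ B₂ := by
    intro b hb hnb
    have hgt : r₁ < dist b c₁ := by
      by_contra h; exact hnb (Metric.mem_closedBall.2 (not_lt.1 h))
    have h1 : dist b c₁ ≤ Metric.infDist b B₁ := by
      apply le_infDist_aux hne₁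
      intro a ha
      have haa : dist a c₁ ≤ r₁ := Metric.mem_closedBall.1 ha
      have := hu b c₁ a
      rcases max_cases (dist b a) (dist a c₁) with ⟨heq, _⟩ | ⟨heq, hlt⟩
      · rw [heq] at this; exact this
      · rw [heq] at this; exact absurd this (not_le.2 (lt_of_le_of_lt haa hgt))
    calc dist b c₁ ≤ Metric.infDist b B₁ := h1
      _ ≤ Metric.hausdorffDist B₂ B₁ := Metric.infDist_le_hausdorffDist_of_mem hb fin'
      _ = Metric.hausdorffDist B₁ B₂ := Metric.hausdorffDist_comm
  have step2 : r₁ ≤ Metric.hausdorffDist B₁ B₂ := by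
    obtain ⟨b, hb, hnb⟩ : ∃ b ∈ B₂, b ∉ B₁ := by
      by_contra h
      push_neg at h
      exact hne (le_antisymm hsub h)
    have hgt : r₁ < dist b c₁ := by
      by_contra h; exact hnb (Metric.mem_closedBall.2 (not_lt.1 h))
    exact le_trans hgt.le (step1 b hb hnb)
  have step3 : ∀ b ∈ B₂, dist b c₁ ≤ Metric.hausdorffDist B₁ B₂ := by
    intro b hb
    by_cases hbB₁ : b ∈ B₁
    · exact le_trans (Metric.mem_closedBall.1 hbB₁) step2
    · exact step1 b hb hbB₁
  apply Metric.diam_le_of_forall_dist_le Metric.hausdorffDist_nonneg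
  intro x hx y hy
  calc dist x y ≤ max (dist x c₁) (dist c₁ y) := hu x y c₁
    _ ≤ Metric.hausdorffDist B₁ B₂ := by
        apply max_le (step3 x hx)
        rw [dist_comm]; exact step3 y hy

/-- In an ultrametric space, the Hausdorff distance between two distinct closed balls equals
the diameter of the smallest closed ball containing their union. -/
theorem stmt7 {X : Type*} [MetricSpace X]
    (hu : ∀ x y z : X, dist x y ≤ max (dist x z) (dist z y))
    {B₁ B₂ Bstar : Set X} (h1 : B₁ ∈ ClosedBalls X) (h2 : B₂ ∈ ClosedBalls X)
    (hne : B₁ ≠ B₂) (hs : Bstar ∈ ClosedBalls X) (hsub : B₁ ∪ B₂ ⊆ Bstar)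
    (hmin : ∀ B ∈ ClosedBalls X, B₁ ∪ B₂ ⊆ B → Bstar ⊆ B) :
    Metric.hausdorffDist B₁ B₂ = Metric.diam Bstar := by
  obtain ⟨c₁, r₁, hr₁, rfl⟩ := h1
  obtain ⟨c₂, r₂, hr₂, rfl⟩ := h2
  obtain ⟨cs, rs, hrs, hBs⟩ := hs
  have hne₁ : (Metric.closedBall c₁ r₁).Nonempty := Metric.nonempty_closedBall.2 hr₁
  have hne₂ : (Metric.closedBall c₂ r₂).Nonempty := Metric.nonempty_closedBall.2 hr₂
  have hbd₁ : IsBounded (Metric.closedBall c₁ r₁) := Metric.isBounded_closedBall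
  have hbd₂ : IsBounded (Metric.closedBall c₂ r₂) := Metric.isBounded_closedBall
  have hbds : IsBounded Bstar := hBs ▸ Metric.isBounded_closedBall
  have fin : EMetric.hausdorffEdist (Metric.closedBall c₁ r₁) (Metric.closedBall c₂ r₂) ≠ ⊤ :=
    Metric.hausdorffEdist_ne_top_of_nonempty_of_bounded hne₁ hne₂ hbd₁ hbd₂
  -- upper bound, uniform
  have hle : Metric.hausdorffDist (Metric.closedBall c₁ r₁) (Metric.closedBall c₂ r₂)
      ≤ Metric.diam Bstar := by
    calc Metric.hausdorffDist (Metric.closedBall c₁ r₁) (Metric.closedBall c₂ r₂)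
        ≤ Metric.diam (Metric.closedBall c₁ r₁ ∪ Metric.closedBall c₂ r₂) :=
          Metric.hausdorffDist_le_diam hne₁ hbd₁ hne₂ hbd₂
      _ ≤ Metric.diam Bstar := Metric.diam_mono hsub hbds
  refine le_antisymm hle ?_
  by_cases hint : (Metric.closedBall c₁ r₁ ∩ Metric.closedBall c₂ r₂).Nonempty
  · -- nested case
    obtain ⟨x, hx₁, hx₂⟩ := hint
    rcases le_total r₁ r₂ with hr | hr
    · -- B₁ ⊆ B₂
      have hss : Metric.closedBall c₁ r₁ ⊆ Metric.closedBall c₂ r₂ := by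
        intro a ha
        have h1 : dist a x ≤ r₁ := le_trans (hu a x c₁) (max_le (Metric.mem_closedBall.1 ha)
          (by rw [dist_comm]; exact Metric.mem_closedBall.1 hx₁))
        exact Metric.mem_closedBall.2 (le_trans (hu a c₂ x)
          (max_le (le_trans h1 hr) (Metric.mem_closedBall.1 hx₂)))
      have hBeq : Bstar = Metric.closedBall c₂ r₂ := by
        apply le_antisymm
        · exact hmin _ ⟨c₂, r₂, hr₂, rfl⟩ (union_subset hss subset_rfl)
        · exact fun y hy => hsub (Or.inr hy)
      rw [hBeq]
      exact diam_le_hausdorffDist_aux hu hr₁ hss hne hbd₂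
    · -- B₂ ⊆ B₁
      have hss : Metric.closedBall c₂ r₂ ⊆ Metric.closedBall c₁ r₁ := by
        intro a ha
        have h1 : dist a x ≤ r₂ := le_trans (hu a x c₂) (max_le (Metric.mem_closedBall.1 ha)
          (by rw [dist_comm]; exact Metric.mem_closedBall.1 hx₂))
        exact Metric.mem_closedBall.2 (le_trans (hu a c₁ x)
          (max_le (le_trans h1 hr) (Metric.mem_closedBall.1 hx₁)))
      have hBeq : Bstar = Metric.closedBall c₁ r₁ := by
        apply le_antisymm
        · exact hmin _ ⟨c₁, r₁, hr₁, rfl⟩ (union_subset subset_rfl hss)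
        · exact fun y hy => hsub (Or.inl hy)
      rw [hBeq, Metric.hausdorffDist_comm]
      exact diam_le_hausdorffDist_aux hu hr₂ hss (Ne.symm hne) hbd₁
  · -- disjoint case
    set D := dist c₁ c₂ with hD
    have hD₁ : r₁ < D := by
      by_contra h
      push_neg at h
      exact hint ⟨c₂, Metric.mem_closedBall.2 (by rw [dist_comm]; exact h),
        Metric.mem_closedBall_self hr₂⟩
    have hD₂ : r₂ < D := by
      by_contra h
      push_neg at h
      exact hint ⟨c₁, Metric.mem_closedBall_self hr₁, Metric.mem_closedBall.2 h⟩
    -- diam Bstar ≤ D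
    have hstar_sub : Bstar ⊆ Metric.closedBall c₁ D := by
      apply hmin _ ⟨c₁, D, dist_nonneg, rfl⟩
      apply union_subset
      · exact Metric.closedBall_subset_closedBall hD₁.le
      · intro b hb
        exact Metric.mem_closedBall.2 (le_trans (hu b c₁ c₂)
          (max_le (le_trans (Metric.mem_closedBall.1 hb) hD₂.le) (by rw [dist_comm])))
    have hdiam : Metric.diam Bstar ≤ D := by
      apply le_trans (Metric.diam_mono hstar_sub Metric.isBounded_closedBall)
      apply Metric.diam_le_of_forall_dist_le dist_nonneg
      intro x hx y hy
      exact le_trans (hu x y c₁) (max_le (Metric.mem_closedBall.1 hx)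
        (by rw [dist_comm]; exact Metric.mem_closedBall.1 hy))
    -- D ≤ hausdorffDist
    have hDle : D ≤ Metric.hausdorffDist (Metric.closedBall c₁ r₁) (Metric.closedBall c₂ r₂) := by
      have h1 : D ≤ Metric.infDist c₁ (Metric.closedBall c₂ r₂) := by
        apply le_infDist_aux hne₂
        intro b hb
        have := hu c₁ c₂ b
        rcases max_cases (dist c₁ b) (dist b c₂) with ⟨heq, _⟩ | ⟨heq, hlt⟩
        · rw [heq] at this; exact this
        · rw [heq] at this
          exact absurd this (not_le.2 (lt_of_le_of_lt (Metric.mem_closedBall.1 hb) hD₂))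
      exact le_trans h1 (Metric.infDist_le_hausdorffDist_of_mem
        (Metric.mem_closedBall_self hr₁) fin)
    exact le_trans hdiam hDle
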